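/- Let p : 𝕋^k → ℝ be continuous (equivalently, a continuous ℤ^k-periodic function on ℝ^k), let v ∈ ℝ^k, and let x₀ ∈ ℝ^k. Then the function q : ℝ → ℝ defined by q(t) = p(x₀ + t v) is almost periodic: for every ε > 0 there exists L > 0 such that every real interval of length L contains a number τ with |q(t) − q(t+τ)| < ε for all t ∈ ℝ. -/
import Mathlib


open Filter Set

/-- A continuous `ℤ^k`-periodic function is "uniformly continuous": coordinatewise small
perturbations change its value little, uniformly in the base point. -/
lemma stmt6_unif (k : ℕ) (p : (Fin k → ℝ) → ℝ) (hp : Continuous p)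
    (hper : ∀ (x : Fin k → ℝ) (m : Fin k → ℤ), p (x + fun i => (m i : ℝ)) = p x)
    {ε : ℝ} (hε : 0 < ε) :
    ∃ δ : ℝ, 0 < δ ∧ ∀ (x w : Fin k → ℝ), (∀ i, |w i| < δ) → |p (x + w) - p x| < ε := by
  have hK : IsCompact (Metric.closedBall (0 : Fin k → ℝ) 2) := isCompact_closedBall _ _
  have hu := Metric.uniformContinuousOn_iff.mp
    (hK.uniformContinuousOn_of_continuous hp.continuousOn) ε hε
  obtain ⟨δ₀, hδ₀, hu⟩ := hu
  refine ⟨min δ₀ 1, lt_min hδ₀ one_pos, fun x w hw => ?_⟩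
  set m : Fin k → ℤ := fun i => ⌊x i⌋ with hm
  set y : Fin k → ℝ := fun i => x i - (m i : ℝ) with hy
  have hyb : ∀ i, |y i| ≤ 1 := by
    intro i
    have h1 : (⌊x i⌋ : ℝ) ≤ x i := Int.floor_le _
    have h2 := Int.lt_floor_add_one (x i)
    have hyi : y i = x i - (⌊x i⌋ : ℝ) := rfl
    rw [hyi, abs_of_nonneg (by linarith)]
    linarith
  have hwb : ∀ i, |w i| < 1 := fun i => lt_of_lt_of_le (hw i) (min_le_right _ _)
  have hyK : y ∈ Metric.closedBall (0 : Fin k → ℝ) 2 := by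
    rw [Metric.mem_closedBall, dist_zero_right]
    refine pi_norm_le_iff_of_nonneg (by norm_num) |>.mpr fun i => ?_
    calc ‖y i‖ = |y i| := rfl
    _ ≤ 1 := hyb i
    _ ≤ 2 := by norm_num
  have hywK : y + w ∈ Metric.closedBall (0 : Fin k → ℝ) 2 := by
    rw [Metric.mem_closedBall, dist_zero_right]
    refine pi_norm_le_iff_of_nonneg (by norm_num) |>.mpr fun i => ?_
    calc ‖(y + w) i‖ = |y i + w i| := rfl
    _ ≤ |y i| + |w i| := abs_add_le _ _
    _ ≤ 1 + 1 := add_le_add (hyb i) (hwb i).le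
    _ = 2 := by norm_num
  have hdist : dist (y + w) y < δ₀ := by
    rcases isEmpty_or_nonempty (Fin k) with hk | hk
    · rw [Subsingleton.elim (y + w) y, dist_self]; exact hδ₀
    · rw [dist_pi_lt_iff hδ₀]
      intro i
      have : dist ((y + w) i) (y i) = |w i| := by
        rw [Real.dist_eq, show (y + w) i - y i = w i by simp [Pi.add_apply]]
      rw [this]
      exact lt_of_lt_of_le (hw i) (min_le_left _ _)
  have key : dist (p (y + w)) (p y) < ε := hu _ hywK _ hyK hdist
  have e1 : p (x + w) = p (y + w) := by
    have : x + w = (y + w) + fun i => (m i : ℝ) := by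
      funext i; simp [hy]; ring
    rw [this, hper]
  have e2 : p x = p y := by
    have : x = y + fun i => (m i : ℝ) := by funext i; simp [hy]
    rw [this, hper]
  rw [e1, e2, ← Real.dist_eq]
  exact key

/-- Return times of the linear flow to a δ-neighborhood of `0` on the torus are syndetic. -/
lemma stmt6_syndetic (k : ℕ) (v : Fin k → ℝ) {δ : ℝ} (hδ : 0 < δ) :
    ∃ L > (0:ℝ), ∀ s : ℝ, ∃ τ ∈ Icc s (s + L),
      ∀ i, ‖((τ * v i : ℝ) : AddCircle (1:ℝ))‖ < δ := by
  set f : ℝ → (Fin k → AddCircle (1:ℝ)) := fun τ i => ((τ * v i : ℝ) : AddCircle (1:ℝ)) with hf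
  have hH : IsCompact (closure (Set.range f)) := isClosed_closure.isCompact
  have hcov : closure (Set.range f) ⊆ ⋃ τ : ℝ, Metric.ball (f τ) δ := by
    intro h hh
    obtain ⟨b, hb, hdb⟩ := Metric.mem_closure_iff.mp hh δ hδ
    obtain ⟨τ, rfl⟩ := hb
    exact Set.mem_iUnion.mpr ⟨τ, Metric.mem_ball.mpr hdb⟩
  obtain ⟨t, ht⟩ := hH.elim_finite_subcover _ (fun τ => Metric.isOpen_ball) hcov
  obtain ⟨M, hM'⟩ := (t.image (fun τ => |τ|)).exists_le
  have hM : ∀ τ ∈ t, |τ| ≤ M := fun τ hτ => hM' _ (Finset.mem_image_of_mem _ hτ)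
  set M' : ℝ := max M 0 with hM'
  refine ⟨2 * M' + 1, by positivity, fun s => ?_⟩
  have hfa : f (s + M') ∈ closure (Set.range f) := subset_closure ⟨s + M', rfl⟩
  obtain ⟨j, hjt, hj⟩ := Set.mem_iUnion₂.mp (ht hfa)
  have hjM : |j| ≤ M' := le_trans (hM j hjt) (le_max_left _ _)
  refine ⟨s + M' - j, ⟨?_, ?_⟩, fun i => ?_⟩
  · have := (abs_le.mp hjM).2; linarith
  · have := (abs_le.mp hjM).1; linarith
  · have hd : dist (f (s + M')) (f j) < δ := Metric.mem_ball.mp hj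
    have hdi : dist (f (s + M') i) (f j i) < δ := lt_of_le_of_lt (dist_le_pi_dist _ _ i) hd
    have : f (s + M') i - f j i = (((s + M' - j) * v i : ℝ) : AddCircle (1:ℝ)) := by
      simp only [hf]
      rw [← AddCircle.coe_sub]
      congr 1; ring
    rwa [dist_eq_norm, this] at hdi

theorem stmt6 (k : ℕ) (p : (Fin k → ℝ) → ℝ) (hp : Continuous p)
    (hper : ∀ (x : Fin k → ℝ) (m : Fin k → ℤ), p (x + fun i => (m i : ℝ)) = p x)
    (v x₀ : Fin k → ℝ) :
    ∀ ε > (0:ℝ), ∃ L > (0:ℝ), ∀ s : ℝ, ∃ τ ∈ Icc s (s + L),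
      ∀ t : ℝ, |p (x₀ + t • v) - p (x₀ + (t + τ) • v)| < ε := by
  intro ε hε
  obtain ⟨δ, hδ, hunif⟩ := stmt6_unif k p hp hper hε
  obtain ⟨L, hL, hsyn⟩ := stmt6_syndetic k v hδ
  refine ⟨L, hL, fun s => ?_⟩
  obtain ⟨τ, hτ, hτδ⟩ := hsyn s
  refine ⟨τ, hτ, fun t => ?_⟩
  set m : Fin k → ℤ := fun i => round (τ * v i) with hm
  set w : Fin k → ℝ := fun i => τ * v i - (m i : ℝ) with hw
  have hwδ : ∀ i, |w i| < δ := by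
    intro i
    have := hτδ i
    rwa [AddCircle.norm_eq, inv_one, one_mul, mul_one] at this
  have e : x₀ + (t + τ) • v = (x₀ + t • v + w) + fun i => (m i : ℝ) := by
    funext i
    simp only [Pi.add_apply, Pi.smul_apply, smul_eq_mul, hw]
    ring
  rw [e, hper, abs_sub_comm]
  exact hunif _ _ hwδ
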